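/- arXiv:2008.06675 — 10 statements merged into one kernel-verified Lean document; each statement's English description precedes it below -/
import Mathlib

section
/- For any non-negative integer n, the alternating sum over i from 0 to n of (-1)^i * C(n,i) * C(n+i,i) equals (-1)^n. -/
/-! The sum is the value at `1` of the shifted Legendre polynomial `Pₙ`. Rodrigues' formula
gives the reflection symmetry `Pₙ(x) = (-1)ⁿ Pₙ(1 - x)`, so `Pₙ(1) = (-1)ⁿ Pₙ(0) = (-1)ⁿ`. -/

open Polynomial

theorem Polynomial.eval_shiftedLegendre (n : ℕ) (x : ℤ) :
    (shiftedLegendre n).eval x =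
      ∑ k ∈ Finset.range (n + 1), (-1) ^ k * n.choose k * (n + k).choose n * x ^ k := by
  simp [shiftedLegendre, eval_finsetSum]

theorem Polynomial.shiftedLegendre_eval_one (n : ℕ) : (shiftedLegendre n).eval 1 = (-1) ^ n := by
  have h := shiftedLegendre_eval_symm n (1 : ℤ)
  rw [coe_aeval_eq_eval, coe_aeval_eq_eval, sub_self, ← coeff_zero_eq_eval_zero,
    coeff_shiftedLegendre] at h
  simpa using h

theorem stmt0 (n : ℕ) :
    ∑ i ∈ Finset.range (n + 1), (-1 : ℤ) ^ i * (n.choose i) * ((n + i).choose i)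
      = (-1 : ℤ) ^ n := by
  rw [← shiftedLegendre_eval_one, eval_shiftedLegendre]
  refine Finset.sum_congr rfl fun i _ => ?_
  rw [Nat.choose_symm_add, one_pow, mul_one]
end

section
/- For any non-negative integer n, the sum over i from 0 to n of (-1)^i * C(n,i) * C(n+i,i) * H_i equals 2*(-1)^n * H_n, where H_i is the i-th harmonic number. -/
/-!
The summands are `a n i * H i`, where `a n i = (-1)^i C(n,i) C(n+i,i)` is the coefficient of `X^i`
in the shifted Legendre polynomial `Pₙ`. Zeilberger's algorithm produces a certificate `G n i` with
`a (n+1) i * H i + a n i * (H i + 2/(n+1)) = G n (i+1) - G n i`; it is checked using only the ratios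
of neighbouring coefficients. Summing over `i`, and using `∑ i, a n i = Pₙ(1) = (-1)^n Pₙ(0)`, the
sums `F n` satisfy `F (n+1) = -F n - 2 (-1)^n / (n+1)`, a recurrence also solved by `2 (-1)^n H n`.
-/

def H (n : ℕ) : ℚ := ∑ j ∈ Finset.range n, (1 : ℚ) / (j + 1)

open Finset Polynomial

lemma H_succ (n : ℕ) : H (n + 1) = H n + 1 / (n + 1) := by
  simp [H, sum_range_succ]

def legendreCoeff (n i : ℕ) : ℚ := (-1) ^ i * n.choose i * (n + i).choose i

lemma legendreCoeff_eq_zero_of_lt {n i : ℕ} (h : n < i) : legendreCoeff n i = 0 := by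
  simp [legendreCoeff, Nat.choose_eq_zero_of_lt h]

lemma legendreCoeff_succ_right (n i : ℕ) :
    legendreCoeff n (i + 1) * (i + 1) ^ 2 = -legendreCoeff n i * (n - i) * (n + i + 1) := by
  rcases lt_or_ge n i with h | h
  · simp [legendreCoeff_eq_zero_of_lt h, legendreCoeff_eq_zero_of_lt (h.trans i.lt_succ_self)]
  have h₁ : ((n.choose (i + 1) * (i + 1) : ℕ) : ℚ) = (n.choose i * (n - i) : ℕ) := by
    rw [Nat.choose_succ_right_eq]
  have h₂ : (((n + i + 1).choose (i + 1) * (i + 1) : ℕ) : ℚ)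
      = ((n + i + 1) * (n + i).choose i : ℕ) := by
    rw [Nat.add_one_mul_choose_eq]
  push_cast [Nat.cast_sub h] at h₁ h₂
  simp only [legendreCoeff, ← add_assoc]
  linear_combination (-1) ^ (i + 1) *
    ((n + i + 1).choose (i + 1) * (i + 1) * h₁ + n.choose i * (n - i) * h₂)

lemma legendreCoeff_succ_left (n i : ℕ) :
    legendreCoeff (n + 1) i * (n + 1 - i) = legendreCoeff n i * (n + 1 + i) := by
  rcases lt_or_ge (n + 1) i with h | h
  · simp [legendreCoeff_eq_zero_of_lt h, legendreCoeff_eq_zero_of_lt (n.lt_succ_self.trans h)]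
  rcases h.eq_or_lt with rfl | h
  · simp [legendreCoeff_eq_zero_of_lt n.lt_succ_self]
  have h₁ : ((n.choose i * (n + 1) : ℕ) : ℚ) = ((n + 1).choose i * (n + 1 - i) : ℕ) := by
    rw [Nat.choose_mul_succ_eq]
  have h₂ : (((n + i).choose i * (n + i + 1) : ℕ) : ℚ) = ((n + i + 1).choose i * (n + 1) : ℕ) := by
    rw [Nat.choose_mul_succ_eq, Nat.add_right_comm, Nat.add_sub_cancel]
  push_cast [Nat.cast_sub h.le] at h₁ h₂
  simp only [legendreCoeff, add_right_comm n 1 i]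
  linear_combination -(-1) ^ i * ((n + i + 1).choose i * h₁ + n.choose i * h₂)

lemma sum_legendreCoeff (n : ℕ) : ∑ i ∈ range (n + 1), legendreCoeff n i = (-1) ^ n := by
  calc ∑ i ∈ range (n + 1), legendreCoeff n i = aeval (1 : ℚ) (shiftedLegendre n) := by
        simp only [shiftedLegendre, legendreCoeff, map_sum, ← Nat.choose_symm_add]
        simp
    _ = (-1) ^ n * aeval (0 : ℚ) (shiftedLegendre n) := by
        simpa using shiftedLegendre_eval_symm n (1 : ℚ)
    _ = (-1) ^ n := by simp [← coeff_zero_eq_aeval_zero', coeff_shiftedLegendre]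

lemma sum_range_add_two_legendreCoeff_mul (n : ℕ) (f : ℕ → ℚ) :
    ∑ i ∈ range (n + 2), legendreCoeff n i * f i
      = ∑ i ∈ range (n + 1), legendreCoeff n i * f i := by
  simp [sum_range_succ _ (n + 1), legendreCoeff_eq_zero_of_lt n.lt_succ_self]

def wzCert (n i : ℕ) : ℚ :=
  -2 * i ^ 2 * legendreCoeff (n + 1) i * H i / ((n + 1) * (n + 1 + i))
    + 2 * i * legendreCoeff n i / (n + 1) ^ 2

lemma wzCert_zero (n : ℕ) : wzCert n 0 = 0 := by
  simp [wzCert]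

lemma wzCert_eq_zero_of_lt {n i : ℕ} (h : n + 1 < i) : wzCert n i = 0 := by
  simp [wzCert, legendreCoeff_eq_zero_of_lt h,
    legendreCoeff_eq_zero_of_lt (n.lt_succ_self.trans h)]

lemma wzCert_succ_sub_wzCert (n i : ℕ) :
    wzCert n (i + 1) - wzCert n i
      = legendreCoeff (n + 1) i * H i + legendreCoeff n i * (H i + 2 / (n + 1)) := by
  have hn := (eq_div_iff (by positivity)).mpr (legendreCoeff_succ_left n i).symm
  have hi := (eq_div_iff (by positivity)).mpr (legendreCoeff_succ_right n i)
  have hni := (eq_div_iff (by positivity)).mpr (legendreCoeff_succ_right (n + 1) i)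
  simp only [wzCert, H_succ, hn, hi, hni]
  push_cast
  field_simp
  ring

lemma sum_legendreCoeff_succ_mul_H (n : ℕ) :
    ∑ i ∈ range (n + 2), legendreCoeff (n + 1) i * H i
      = -∑ i ∈ range (n + 1), legendreCoeff n i * H i - 2 * (-1) ^ n / (n + 1) := by
  have h := sum_range_sub (wzCert n) (n + 2)
  rw [wzCert_zero, wzCert_eq_zero_of_lt (Nat.lt_succ_self _),
    sum_congr rfl fun i _ ↦ wzCert_succ_sub_wzCert n i, sum_add_distrib,
    sum_range_add_two_legendreCoeff_mul] at h
  simp only [mul_add, sum_add_distrib, ← sum_mul, sum_legendreCoeff] at h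
  linear_combination h

theorem stmt1 (n : ℕ) :
    ∑ i ∈ Finset.range (n + 1),
        (-1 : ℚ) ^ i * (n.choose i) * ((n + i).choose i) * H i
      = 2 * (-1 : ℚ) ^ n * H n := by
  change ∑ i ∈ range (n + 1), legendreCoeff n i * H i = _
  induction n with
  | zero => simp [H]
  | succ n ih =>
    rw [sum_legendreCoeff_succ_mul_H, ih, H_succ]
    field_simp
    ring
end

section
/- For any non-negative integers n > i, the sum over k from i to n-1 of ((4k+1)/(-3)^k) * C(k+3i, 4i) equals (n-i) * C(n+3i, 4i) * (-3)^{1-n}. -/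
/-!
The summand is a discrete derivative: with
`F m = (m - i) * C(m + 3i, 4i) * (-3)^(1 - m)`, one has `F (m + 1) - F m = (4m + 1) / (-3)^m * C(m + 3i, 4i)`
for every `m`, by the absorption identity `C(m + 3i, 4i) * (m + 3i + 1) = C(m + 3i + 1, 4i) * (m + 1 - i)`.
The summands with `k < i` vanish, so the sum over `[i, n)` is the sum over `[0, n)`, which telescopes
to `F n - F 0 = F n`.
-/

theorem Nat.cast_choose_mul_succ_eq {R : Type*} [Ring R] (n k : ℕ) :
    (n.choose k : R) * (n + 1) = ((n + 1).choose k : R) * (n + 1 - k) := by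
  rcases le_or_gt k (n + 1) with hk | hk
  · have h := congrArg (Nat.cast : ℕ → R) (Nat.choose_mul_succ_eq n k)
    push_cast [hk] at h
    exact h
  · rw [Nat.choose_eq_zero_of_lt hk, Nat.choose_eq_zero_of_lt (by omega)]
    simp

namespace AlternatingChooseSum

def closedForm (i m : ℕ) : ℚ :=
  ((m : ℚ) - i) * ((m + 3 * i).choose (4 * i)) * (-3 : ℚ) ^ ((1 : ℤ) - m)

theorem closedForm_zero (i : ℕ) : closedForm i 0 = 0 := by
  rcases Nat.eq_zero_or_pos i with rfl | hi
  · simp [closedForm]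
  · simp [closedForm, Nat.choose_eq_zero_of_lt (by omega : 3 * i < 4 * i)]

theorem closedForm_succ_sub (i m : ℕ) :
    closedForm i (m + 1) - closedForm i m
      = (4 * (m : ℚ) + 1) / (-3 : ℚ) ^ m * ((m + 3 * i).choose (4 * i)) := by
  have absorb : ((m + 1 : ℚ) - i) * ((m + 1 + 3 * i).choose (4 * i))
      = (m + 3 * i + 1) * ((m + 3 * i).choose (4 * i)) := by
    have h := Nat.cast_choose_mul_succ_eq (R := ℚ) (m + 3 * i) (4 * i)
    rw [show m + 1 + 3 * i = m + 3 * i + 1 by ring]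
    push_cast at h ⊢
    linear_combination -h
  have exp_succ : (1 : ℤ) - (m + 1 : ℕ) = -(m : ℤ) := by push_cast; ring
  have exp_self : (-3 : ℚ) ^ ((1 : ℤ) - m) = -3 / (-3 : ℚ) ^ m := by
    rw [zpow_sub₀ (by norm_num), zpow_one, zpow_natCast]
  unfold closedForm
  rw [exp_succ, zpow_neg, zpow_natCast, exp_self]
  push_cast
  rw [absorb]
  field_simp
  ring

end AlternatingChooseSum

open AlternatingChooseSum in
theorem stmt3_general (n i : ℕ) :
    ∑ k ∈ Finset.Ico i n, (4 * (k : ℚ) + 1) / (-3 : ℚ) ^ k * ((k + 3 * i).choose (4 * i))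
      = ((n : ℚ) - i) * ((n + 3 * i).choose (4 * i)) * (-3 : ℚ) ^ ((1 : ℤ) - n) := by
  have extend : ∑ k ∈ Finset.Ico i n, (4 * (k : ℚ) + 1) / (-3 : ℚ) ^ k * ((k + 3 * i).choose (4 * i))
      = ∑ k ∈ Finset.range n, (4 * (k : ℚ) + 1) / (-3 : ℚ) ^ k * ((k + 3 * i).choose (4 * i)) := by
    refine Finset.sum_subset (fun k hk => Finset.mem_range.2 (Finset.mem_Ico.1 hk).2)
      (fun k hk hki => ?_)
    simp only [Finset.mem_Ico, Finset.mem_range, not_and, not_lt] at hk hki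
    simp [Nat.choose_eq_zero_of_lt (by omega : k + 3 * i < 4 * i)]
  rw [extend, ← Finset.sum_congr rfl (fun k _ => closedForm_succ_sub i k),
    Finset.sum_range_sub, closedForm_zero, sub_zero]
  rfl

theorem stmt3 (n i : ℕ) (h : i < n) :
    ∑ k ∈ Finset.Ico i n, (4 * (k : ℚ) + 1) / (-3 : ℚ) ^ k * ((k + 3 * i).choose (4 * i))
      = ((n : ℚ) - i) * ((n + 3 * i).choose (4 * i)) * (-3 : ℚ) ^ ((1 : ℤ) - n) :=
  stmt3_general n i
end

section
/- For any non-negative integers n > i, the sum over k from i to n-1 of (-3)^k * (4k+3) * C(k+i, 4i) equals 3*(n-3i) * C(n+i, 4i) * (-3)^{n-1}. -/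
/-!
With `F k = -(k - 3i) C(k+i, 4i) (-3)^k`, the summand is `F (k+1) - F k`: dividing by `(-3)^k`
this is the identity `(m + 1 - r) C(m+1, r) = (m + 1) C(m, r)` at `m = k + i`, `r = 4i`.
Moreover the terms with `k < i` vanish, so the sum may be taken over `range n` and telescopes.
-/

open Finset

lemma Nat.cast_succ_sub_mul_choose_succ {R : Type*} [CommRing R] (m r : ℕ) :
    ((m : R) + 1 - r) * (m + 1).choose r = ((m : R) + 1) * m.choose r := by
  rcases le_or_gt r (m + 1) with hr | hr
  · have h := congrArg (Nat.cast : ℕ → R) (Nat.choose_mul_succ_eq m r)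
    push_cast [hr] at h
    linear_combination -h
  · simp [Nat.choose_eq_zero_of_lt hr, Nat.choose_eq_zero_of_lt (show m < r by omega)]

lemma sum_range_neg_three_pow_mul_choose (n i : ℕ) :
    ∑ k ∈ range n, (-3 : ℤ) ^ k * (4 * (k : ℤ) + 3) * ((k + i).choose (4 * i))
      = -((n : ℤ) - 3 * i) * ((n + i).choose (4 * i)) * (-3 : ℤ) ^ n := by
  induction n with
  | zero =>
    rcases Nat.eq_zero_or_pos i with rfl | hi
    · simp
    · simp [Nat.choose_eq_zero_of_lt (by omega : i < 4 * i)]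
  | succ k ih =>
    have key := Nat.cast_succ_sub_mul_choose_succ (R := ℤ) (k + i) (4 * i)
    rw [sum_range_succ, ih, show k + 1 + i = k + i + 1 by omega]
    push_cast at key ⊢
    linear_combination (-3 : ℤ) ^ (k + 1) * key

lemma sum_Ico_neg_three_pow_mul_choose_eq_sum_range (n i : ℕ) :
    ∑ k ∈ Ico i n, (-3 : ℤ) ^ k * (4 * (k : ℤ) + 3) * ((k + i).choose (4 * i))
      = ∑ k ∈ range n, (-3 : ℤ) ^ k * (4 * (k : ℤ) + 3) * ((k + i).choose (4 * i)) := by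
  refine sum_subset (fun k hk => by simp at hk ⊢; omega) (fun k hkn hki => ?_)
  have hk : k + i < 4 * i := by simp at hkn hki; omega
  simp [Nat.choose_eq_zero_of_lt hk]

theorem stmt4 (n i : ℕ) (h : i < n) :
    ∑ k ∈ Finset.Ico i n, (-3 : ℤ) ^ k * (4 * (k : ℤ) + 3) * ((k + i).choose (4 * i))
      = 3 * ((n : ℤ) - 3 * i) * ((n + i).choose (4 * i)) * (-3 : ℤ) ^ (n - 1) := by
  obtain ⟨m, rfl⟩ : ∃ m, n = m + 1 := ⟨n - 1, by omega⟩
  rw [sum_Ico_neg_three_pow_mul_choose_eq_sum_range, sum_range_neg_three_pow_mul_choose,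
    Nat.add_sub_cancel, pow_succ]
  ring
end

section
/- For any non-negative integers n > i, the sum over k from i to n-1 of (2k+1) * C(k+i, 2i) * C(2i, i) equals (n^2/(i+1)) * C(n-1, i) * C(n+i, i). -/
/-! The right-hand side `F n` is a discrete antiderivative of the summand: after writing
`C(m+i, 2i) C(2i, i) = C(m+i, i) C(m, i)` and shifting `C(m+1+i, i)` and `C(m-1, i)` to
`C(m+i, i)` and `C(m, i)`, the difference `F (m+1) - F m` reduces to
`((m+1)(m+1+i) - m(m-i)) / (i+1) = 2m+1` times `C(m+i, i) C(m, i)`. Since the summand vanishes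
for `k < i`, the sum telescopes over `range n`. -/

open Finset

theorem choose_two_mul_mul_choose (m i : ℕ) :
    (m + i).choose (2 * i) * (2 * i).choose i = (m + i).choose i * m.choose i := by
  rcases lt_or_ge m i with hmi | him
  · simp [Nat.choose_eq_zero_of_lt hmi, Nat.choose_eq_zero_of_lt (by omega : m + i < 2 * i)]
  · simpa [two_mul] using Nat.choose_mul (n := m + i) (k := 2 * i) (s := i) (by omega)

theorem cast_mul_choose_pred (m i : ℕ) :
    (m : ℚ) * (m - 1).choose i = ((m : ℚ) - i) * m.choose i := by
  rcases lt_or_ge m i with hmi | him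
  · simp [Nat.choose_eq_zero_of_lt hmi, Nat.choose_eq_zero_of_lt (by omega : m - 1 < i)]
  obtain _ | p := m
  · simp_all
  rw [Nat.add_sub_cancel, ← Nat.cast_sub him]
  exact_mod_cast by rw [mul_comm, Nat.choose_mul_succ_eq p i, mul_comm]

theorem cast_succ_mul_choose_add (m i : ℕ) :
    ((m : ℚ) + 1) * (m + 1 + i).choose i = ((m : ℚ) + 1 + i) * (m + i).choose i := by
  have h := Nat.choose_mul_succ_eq (m + i) i
  rw [show m + i + 1 - i = m + 1 by omega, show m + i + 1 = m + 1 + i by omega] at h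
  exact_mod_cast by rw [mul_comm, ← h, mul_comm]

def chooseSumClosedForm (i n : ℕ) : ℚ :=
  (n : ℚ) ^ 2 / ((i : ℚ) + 1) * (n - 1).choose i * (n + i).choose i

theorem chooseSumClosedForm_succ_sub (m i : ℕ) :
    chooseSumClosedForm i (m + 1) - chooseSumClosedForm i m
      = (2 * (m : ℚ) + 1) * (m + i).choose (2 * i) * (2 * i).choose i := by
  have hsplit : ((m + i).choose (2 * i) : ℚ) * (2 * i).choose i
      = (m + i).choose i * m.choose i := by
    exact_mod_cast choose_two_mul_mul_choose m i
  simp only [chooseSumClosedForm, Nat.add_sub_cancel, Nat.cast_succ]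
  field_simp
  linear_combination (((m : ℚ) + 1) * m.choose i) * cast_succ_mul_choose_add m i
    - ((m : ℚ) * (m + i).choose i) * cast_mul_choose_pred m i
    - ((i : ℚ) + 1) * (2 * (m : ℚ) + 1) * hsplit

theorem stmt5_general (n i : ℕ) :
    ∑ k ∈ Finset.Ico i n, (2 * (k : ℚ) + 1) * ((k + i).choose (2 * i)) * ((2 * i).choose i)
      = (n : ℚ) ^ 2 / ((i : ℚ) + 1) * ((n - 1).choose i) * ((n + i).choose i) := by
  have hvanish : ∀ k ∈ range n, k ∉ Ico i n →
      (2 * (k : ℚ) + 1) * ((k + i).choose (2 * i)) * ((2 * i).choose i) = 0 := by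
    intro k hk hki
    have hlt : k + i < 2 * i := by simp_all; omega
    simp [Nat.choose_eq_zero_of_lt hlt]
  rw [sum_subset (fun k hk => mem_range.2 (mem_Ico.1 hk).2) hvanish,
    sum_congr rfl fun m _ => (chooseSumClosedForm_succ_sub m i).symm, sum_range_sub]
  simp [chooseSumClosedForm]

theorem stmt5 (n i : ℕ) (h : i < n) :
    ∑ k ∈ Finset.Ico i n, (2 * (k : ℚ) + 1) * ((k + i).choose (2 * i)) * ((2 * i).choose i)
      = (n : ℚ) ^ 2 / ((i : ℚ) + 1) * ((n - 1).choose i) * ((n + i).choose i) :=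
  stmt5_general n i
end

section
/- For any non-negative integers n > i, the sum over k from i to n-1 of (-1)^k * (2k+1) * C(k+i, 2i) * C(2i, i) equals (-1)^{n-1} * n * C(n-1, i) * C(n+i, i). -/
/-!
The summand vanishes for `k < i`, so the sum may run over all `k < n`. Since
`C(k+i, 2i) C(2i, i) = C(k+i, i) C(k, i)`, the summand is the difference `F (k + 1) - F k` of
consecutive values of the right-hand side `F n = (-1)^(n-1) n C(n-1, i) C(n+i, i)`: the identities
`(k+1) C(k+1+i, i) = (k+1+i) C(k+i, i)` and `k C(k-1, i) = (k-i) C(k, i)` turn `F (k + 1) - F k`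
into `(-1)^k ((k+1+i) + (k-i)) C(k+i, i) C(k, i)`. The sum therefore telescopes.
-/

namespace Nat

theorem choose_two_mul_mul_central_choose (m i : ℕ) :
    (m + i).choose (2 * i) * (2 * i).choose i = (m + i).choose i * m.choose i := by
  rcases le_or_gt i m with hi | hi
  · have h := Nat.choose_mul (n := m + i) (k := 2 * i) (s := i) (by omega)
    rwa [show m + i - i = m by omega, show 2 * i - i = i by omega] at h
  · rw [Nat.choose_eq_zero_of_lt (by omega : m + i < 2 * i), Nat.choose_eq_zero_of_lt hi]
    simp

theorem mul_choose_pred (m i : ℕ) : m * (m - 1).choose i = (m - i) * m.choose i := by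
  cases m with
  | zero => simp
  | succ k => simpa [Nat.mul_comm] using Nat.choose_mul_succ_eq k i

theorem two_mul_add_one_mul_choose_two_mul_mul_central_choose (m i : ℕ) :
    (2 * m + 1) * ((m + i).choose (2 * i) * (2 * i).choose i)
      = (m + 1) * m.choose i * (m + 1 + i).choose i + m * (m - 1).choose i * (m + i).choose i := by
  have hup : (m + 1) * (m + 1 + i).choose i = (m + 1 + i) * (m + i).choose i := by
    have h := Nat.choose_mul_succ_eq (m + i) i
    rw [show m + i + 1 - i = m + 1 by omega, show m + i + 1 = m + 1 + i by omega] at h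
    linarith
  have hsum : (2 * m + 1) * m.choose i = (m + 1 + i + (m - i)) * m.choose i := by
    rcases le_or_gt i m with hi | hi
    · congr 1; omega
    · simp [Nat.choose_eq_zero_of_lt hi]
  calc (2 * m + 1) * ((m + i).choose (2 * i) * (2 * i).choose i)
      = (m + i).choose i * ((2 * m + 1) * m.choose i) := by
        rw [choose_two_mul_mul_central_choose]; ring
    _ = (m + i).choose i * ((m + 1 + i + (m - i)) * m.choose i) := by rw [hsum]
    _ = m.choose i * ((m + 1) * (m + 1 + i).choose i)
          + (m + i).choose i * ((m - i) * m.choose i) := by rw [hup]; ring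
    _ = _ := by rw [← mul_choose_pred]; ring

end Nat

theorem neg_one_pow_pred_mul_self (n : ℕ) :
    (-1 : ℤ) ^ (n - 1) * n = -((-1) ^ n * n) := by
  cases n with
  | zero => simp
  | succ k => simp [pow_succ]

theorem sum_range_neg_one_pow_mul_choose_two_mul (n i : ℕ) :
    ∑ k ∈ Finset.range n, (-1 : ℤ) ^ k * (2 * (k : ℤ) + 1) * ((k + i).choose (2 * i)) * ((2 * i).choose i)
      = (-1 : ℤ) ^ (n - 1) * n * ((n - 1).choose i) * ((n + i).choose i) := by
  induction n with
  | zero => simp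
  | succ n ih =>
    have key : ((2 * n + 1) * ((n + i).choose (2 * i) * (2 * i).choose i) : ℤ)
        = (n + 1) * n.choose i * (n + 1 + i).choose i + n * (n - 1).choose i * (n + i).choose i := by
      exact_mod_cast Nat.two_mul_add_one_mul_choose_two_mul_mul_central_choose n i
    rw [Finset.sum_range_succ, ih, neg_one_pow_pred_mul_self, Nat.add_sub_cancel]
    push_cast
    linear_combination (-1 : ℤ) ^ n * key

theorem stmt6_general (n i : ℕ) :
    ∑ k ∈ Finset.Ico i n, (-1 : ℤ) ^ k * (2 * (k : ℤ) + 1) * ((k + i).choose (2 * i)) * ((2 * i).choose i)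
      = (-1 : ℤ) ^ (n - 1) * n * ((n - 1).choose i) * ((n + i).choose i) := by
  rw [← sum_range_neg_one_pow_mul_choose_two_mul]
  refine Finset.sum_subset (fun k hk => by simp at hk ⊢; omega) fun k hk hki => ?_
  simp only [Finset.mem_range, Finset.mem_Ico, not_and, not_lt] at hk hki
  rw [Nat.choose_eq_zero_of_lt (by omega : k + i < 2 * i)]
  simp

theorem stmt6 (n i : ℕ) (h : i < n) :
    ∑ k ∈ Finset.Ico i n, (-1 : ℤ) ^ k * (2 * (k : ℤ) + 1) * ((k + i).choose (2 * i)) * ((2 * i).choose i)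
      = (-1 : ℤ) ^ (n - 1) * n * ((n - 1).choose i) * ((n + i).choose i) :=
  stmt6_general n i
end

section
/- For any prime p >= 5 and m = floor(p/3), and any integer k with 0 <= k <= m, the p-integral rational number (3k)!/(27^k * (k!)^3) is congruent to (-1)^k * C(m,k) * C(m+k,k) modulo p. -/
/-!
Since `(3k)! / (27^k k!^3) = ∏_{j<k} (j + 1/3)(j + 2/3) / (j + 1)^2`, the identity
`(3j+1)(3j+2) = 9(j-m)(j+m+1) + (3m+1)(3m+2)` together with `p ∣ (3m+1)(3m+2)` turns the product
modulo `p` into `∏_{j<k} (j-m)(j+m+1) / (j+1)^2 = (-1)^k C(m,k) C(m+k,k)`. As `p` divides neither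
`3` nor `k!`, the difference of the two sides is `p` times a `p`-integral rational.
-/

open Nat Finset

theorem Nat.factorial_three_mul (k : ℕ) :
    (3 * k)! = ∏ j ∈ range k, (3 * j + 1) * (3 * j + 2) * (3 * j + 3) := by
  induction k with
  | zero => rfl
  | succ k ih =>
    rw [prod_range_succ, ← ih, show 3 * (k + 1) = 3 * k + 2 + 1 by ring, factorial_succ,
      factorial_succ, factorial_succ]
    ring

section

variable {R : Type*} [CommRing R]

theorem prod_range_natCast_sub_eq_neg_one_pow_mul_descFactorial {m k : ℕ} (hk : k ≤ m) :
    ∏ j ∈ range k, ((j : R) - m) = (-1) ^ k * m.descFactorial k :=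
  calc ∏ j ∈ range k, ((j : R) - m) = ∏ j ∈ range k, (-1 * ((m - j : ℕ) : R)) :=
        prod_congr rfl fun j hj => by rw [Nat.cast_sub (by simp at hj; omega)]; ring
    _ = (-1) ^ k * m.descFactorial k := by
        rw [prod_mul_distrib, prod_const, card_range, descFactorial_eq_prod_range, cast_prod]

theorem prod_range_natCast_add_eq_ascFactorial (n k : ℕ) :
    ∏ j ∈ range k, ((j : R) + n) = n.ascFactorial k := by
  simp [ascFactorial_eq_prod_range, add_comm]

theorem cast_factorial_three_mul_of_mul_eq_zero {m : ℕ}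
    (hm : ((3 * m + 1) * (3 * m + 2) : R) = 0) {k : ℕ} (hk : k ≤ m) :
    ((3 * k)! : R) = (-1) ^ k * m.choose k * (m + k).choose k * 27 ^ k * (k ! : R) ^ 3 := by
  have hfactor (j : ℕ) : (((3 * j + 1) * (3 * j + 2) * (3 * j + 3) : ℕ) : R)
      = 27 * (((j : R) - m) * ((j : R) + (m + 1 : ℕ)) * ((j : R) + (1 : ℕ))) := by
    push_cast
    linear_combination (3 * (j : R) + 3) * hm
  rw [factorial_three_mul, cast_prod, prod_congr rfl fun j _ => hfactor j, prod_mul_distrib,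
    prod_mul_distrib, prod_mul_distrib, prod_const, card_range,
    prod_range_natCast_sub_eq_neg_one_pow_mul_descFactorial hk,
    prod_range_natCast_add_eq_ascFactorial, prod_range_natCast_add_eq_ascFactorial,
    one_ascFactorial, descFactorial_eq_factorial_mul_choose, ascFactorial_eq_factorial_mul_choose]
  push_cast
  ring

end

theorem Rat.exists_div_eq_mul_not_dvd_den {p : ℕ} {n : ℤ} {d : ℕ} (hn : (p : ℤ) ∣ n)
    (hd : ¬ p ∣ d) : ∃ c : ℚ, (n : ℚ) / d = p * c ∧ ¬ p ∣ c.den := by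
  obtain ⟨n, rfl⟩ := hn
  refine ⟨n / d, by push_cast; ring, fun hp => hd ?_⟩
  have hden := Rat.den_dvd n d
  rw [Rat.divInt_eq_div, Int.cast_natCast] at hden
  exact hp.trans (Int.ofNat_dvd.mp hden)

theorem Nat.dvd_three_mul_div_three_add_one_mul_add_two {p : ℕ} (h3 : ¬ 3 ∣ p) :
    p ∣ (3 * (p / 3) + 1) * (3 * (p / 3) + 2) := by
  rcases (by omega : p = 3 * (p / 3) + 1 ∨ p = 3 * (p / 3) + 2) with h | h
  · exact h ▸ dvd_mul_right _ _
  · exact h ▸ dvd_mul_left _ _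

theorem stmt8 (p : ℕ) (hp : p.Prime) (h5 : 5 ≤ p) (k : ℕ) (hk : k ≤ p / 3) :
    ∃ c : ℚ,
      (Nat.factorial (3 * k) : ℚ) / (27 ^ k * (Nat.factorial k : ℚ) ^ 3)
        - (-1 : ℚ) ^ k * ((p / 3).choose k) * ((p / 3 + k).choose k)
        = p * c ∧ ¬ (p ∣ c.den) := by
  have hp3 : Nat.Coprime 3 p := (Nat.coprime_primes prime_three hp).mpr (by omega)
  have hm : (3 * ((p / 3 : ℕ) : ZMod p) + 1) * (3 * ((p / 3 : ℕ) : ZMod p) + 2) = 0 := by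
    have h3 : ¬ 3 ∣ p := fun h => by simpa using hp3.eq_one_of_dvd h
    exact_mod_cast (ZMod.natCast_eq_zero_iff _ p).mpr
      (dvd_three_mul_div_three_add_one_mul_add_two h3)
  have hd : ¬ p ∣ 27 ^ k * k ! ^ 3 := by
    rw [hp.dvd_mul, show 27 ^ k = 3 ^ (3 * k) by rw [pow_mul]; norm_num]
    rintro (h | h)
    · exact hp.ne_one ((hp3.pow_left _).symm.eq_one_of_dvd h)
    · have := hp.dvd_factorial.mp (hp.dvd_of_dvd_pow h)
      omega
  have hcong : (p : ℤ) ∣ (3 * k)! -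
      (-1) ^ k * (p / 3).choose k * (p / 3 + k).choose k * (27 ^ k * k ! ^ 3) := by
    rw [← ZMod.intCast_zmod_eq_zero_iff_dvd]
    push_cast
    rw [cast_factorial_three_mul_of_mul_eq_zero hm hk]
    ring
  obtain ⟨c, hc, hden⟩ := Rat.exists_div_eq_mul_not_dvd_den hcong hd
  refine ⟨c, ?_, hden⟩
  rw [← hc]
  push_cast
  field_simp
end

section
/- For any prime p >= 5, H_{floor(p/3)} is congruent to -(3/2) * q_p(3) modulo p, where H_m is the m-th harmonic number and q_p(3) = (3^{p-1}-1)/p. -/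
open Finset
open scoped Nat

theorem sq_dvd_prod_mul_add_sub {R ι : Type*} [CommRing R] [DecidableEq ι] (p : R)
    (s : Finset ι) (t r : ι → R) :
    p ^ 2 ∣ ∏ i ∈ s, (p * t i + r i)
      - (∏ i ∈ s, r i + p * ∑ i ∈ s, t i * ∏ j ∈ s.erase i, r j) := by
  induction s using Finset.induction_on with
  | empty => simp
  | @insert a s ha ih =>
    obtain ⟨k, hk⟩ := ih
    have hsum : ∑ i ∈ s, t i * ∏ j ∈ (insert a s).erase i, r j
        = r a * ∑ i ∈ s, t i * ∏ j ∈ s.erase i, r j := by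
      rw [mul_sum]
      refine sum_congr rfl fun i hi => ?_
      rw [erase_insert_of_ne (by rintro rfl; exact ha hi),
        prod_insert (fun h => ha (mem_of_mem_erase h))]
      ring
    rw [prod_insert ha, prod_insert ha, sum_insert ha, erase_insert ha, hsum]
    exact ⟨t a * ∑ i ∈ s, t i * ∏ j ∈ s.erase i, r j + (p * t a + r a) * k, by
      linear_combination (p * t a + r a) * hk⟩

theorem sum_Ioc_three_mul_div_mul {R : Type*} [Semiring R] {n : ℕ} (hn : ¬ 3 ∣ n) (f : ℕ → R) :
    ∑ j ∈ Ioc 0 (n - 1), ((3 * j / n : ℕ) : R) * f j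
      = ∑ j ∈ Ioc (n / 3) (n - 1), f j + ∑ j ∈ Ioc (2 * n / 3) (n - 1), f j := by
  have hfloor : ∀ j ∈ Ioc 0 (n - 1),
      3 * j / n = (if n / 3 < j then 1 else 0) + (if 2 * n / 3 < j then 1 else 0) := by
    intro j hj
    rw [mem_Ioc] at hj
    have hmod := Nat.div_add_mod (3 * j) n
    have hlt := Nat.mod_lt (3 * j) (by omega : 0 < n)
    have hle : 3 * j / n < 3 := Nat.div_lt_of_lt_mul (by omega)
    generalize 3 * j / n = k at hmod hle ⊢
    interval_cases k <;> split_ifs <;> omega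
  have hfilter : ∀ m, Ioc m (n - 1) = (Ioc 0 (n - 1)).filter (m < ·) := fun m => by
    ext j; simp only [mem_Ioc, mem_filter]; omega
  rw [hfilter (n / 3), hfilter (2 * n / 3), sum_filter, sum_filter, ← sum_add_distrib]
  refine sum_congr rfl fun j hj => ?_
  rw [hfloor j hj]
  split_ifs <;> simp [two_mul]

section Prime

variable {p : ℕ} [hp : Fact p.Prime]

theorem mem_Ioc_zero_pred_iff {j : ℕ} :
    j ∈ (Ioc 0 (p - 1) : Set ℕ) ↔ j < p ∧ (j : ZMod p) ≠ 0 := by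
  have := hp.out.pos
  rw [Ne, ZMod.natCast_eq_zero_iff, coe_Ioc, Set.mem_Ioc]
  constructor
  · rintro ⟨h0, h1⟩; exact ⟨by omega, fun h => absurd (Nat.le_of_dvd h0 h) (by omega)⟩
  · rintro ⟨h0, h1⟩; exact ⟨Nat.pos_of_ne_zero (by rintro rfl; exact h1 (dvd_zero p)), by omega⟩

theorem bijOn_mul_mod {a : ℕ} (ha : (a : ZMod p) ≠ 0) :
    Set.BijOn (fun j => a * j % p) (Ioc 0 (p - 1) : Set ℕ) (Ioc 0 (p - 1)) := by
  have hmaps : Set.MapsTo (fun j => a * j % p) (Ioc 0 (p - 1) : Set ℕ) (Ioc 0 (p - 1)) := by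
    intro j hj
    rw [mem_Ioc_zero_pred_iff] at hj ⊢
    refine ⟨Nat.mod_lt _ hp.out.pos, ?_⟩
    rw [ZMod.natCast_mod, Nat.cast_mul]
    exact mul_ne_zero ha hj.2
  refine ((finite_toSet _).injOn_iff_bijOn_of_mapsTo hmaps).1 fun x hx y hy hxy => ?_
  rw [mem_Ioc_zero_pred_iff] at hx hy
  have : (a * x : ZMod p) = a * y := by simpa using congrArg (Nat.cast : ℕ → ZMod p) hxy
  simpa [ZMod.natCast_eq_natCast_iff', Nat.mod_eq_of_lt hx.1, Nat.mod_eq_of_lt hy.1]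
    using mul_left_cancel₀ ha this

theorem prod_Ioc_comp_mul_mod {M : Type*} [CommMonoid M] {a : ℕ} (ha : (a : ZMod p) ≠ 0)
    (f : ℕ → M) : ∏ j ∈ Ioc 0 (p - 1), f (a * j % p) = ∏ j ∈ Ioc 0 (p - 1), f j :=
  have h := bijOn_mul_mod ha
  prod_nbij _ (fun _ hj => h.mapsTo hj) h.injOn h.surjOn fun _ _ => rfl

theorem dvd_mul_prod_sub_sum_mul_prod_erase {a : ℕ} (ha : (a : ZMod p) ≠ 0) {q : ℤ}
    (hq : (a : ℤ) ^ (p - 1) - 1 = p * q) :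
    (p : ℤ) ∣ q * ∏ j ∈ Ioc 0 (p - 1), (j : ℤ) - ∑ j ∈ Ioc 0 (p - 1),
      ((a * j / p : ℕ) : ℤ) * ∏ i ∈ (Ioc 0 (p - 1)).erase j, ((a * i % p : ℕ) : ℤ) := by
  have hsplit : ∀ j : ℕ, (p : ℤ) * (a * j / p : ℕ) + (a * j % p : ℕ) = a * j := fun j => by
    exact_mod_cast Nat.div_add_mod (a * j) p
  have hdiv := sq_dvd_prod_mul_add_sub (p : ℤ) (Ioc 0 (p - 1)) (fun j => ((a * j / p : ℕ) : ℤ))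
    (fun j => ((a * j % p : ℕ) : ℤ))
  rw [prod_congr rfl fun j _ => hsplit j, prod_mul_distrib, prod_const, Nat.card_Ioc, Nat.sub_zero,
    prod_Ioc_comp_mul_mod ha, show (a : ℤ) ^ (p - 1) = p * q + 1 by linarith, pow_two,
    show ∀ x y : ℤ, (p * q + 1) * x - (x + p * y) = p * (q * x - y) by intros; ring] at hdiv
  exact (mul_dvd_mul_iff_left (by exact_mod_cast hp.out.ne_zero)).1 hdiv

theorem lerch_formula {a : ℕ} (ha : (a : ZMod p) ≠ 0) {q : ℤ}
    (hq : (a : ℤ) ^ (p - 1) - 1 = p * q) :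
    (q : ZMod p) = ∑ j ∈ Ioc 0 (p - 1), ((a * j / p : ℕ) : ZMod p) / (a * j) := by
  set s := Ioc 0 (p - 1)
  have hW : ∏ j ∈ s, (j : ZMod p) ≠ 0 :=
    prod_ne_zero_iff.2 fun j hj => (mem_Ioc_zero_pred_iff.1 hj).2
  have herase : ∀ j ∈ s,
      ∏ i ∈ s.erase j, (a * i : ZMod p) = (∏ j ∈ s, (j : ZMod p)) / (a * j) := by
    intro j hj
    rw [eq_div_iff (mul_ne_zero ha (mem_Ioc_zero_pred_iff.1 hj).2), mul_comm,
      mul_prod_erase s (fun i => (a * i : ZMod p)) hj, prod_mul_distrib, prod_const,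
      Nat.card_Ioc, Nat.sub_zero, ZMod.pow_card_sub_one_eq_one ha, one_mul]
  have hcong := (ZMod.intCast_zmod_eq_zero_iff_dvd _ p).2
    (dvd_mul_prod_sub_sum_mul_prod_erase ha hq)
  simp only [Int.cast_sub, Int.cast_mul, Int.cast_sum, Int.cast_prod, Int.cast_natCast,
    ZMod.natCast_mod, Nat.cast_mul] at hcong
  refine mul_right_cancel₀ hW ?_
  rw [sum_mul, sub_eq_zero.1 hcong, sum_congr rfl fun j hj => by rw [herase j hj]]
  refine sum_congr rfl fun j _ => ?_
  ring

theorem sum_Ioc_inv_eq_neg_sum_Ioc_inv {a b : ℕ} (hb : b < p) :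
    ∑ j ∈ Ioc a b, (j : ZMod p)⁻¹ = -∑ j ∈ Ioc (p - 1 - b) (p - 1 - a), (j : ZMod p)⁻¹ := by
  rw [← sum_neg_distrib]
  refine sum_nbij' (p - ·) (p - ·) (fun j hj => ?_) (fun j hj => ?_) (fun j hj => ?_)
    (fun j hj => ?_) fun j hj => ?_ <;> simp only [mem_Ioc] at hj ⊢
  all_goals try omega
  rw [Nat.cast_sub (by omega), ZMod.natCast_self, zero_sub, inv_neg, neg_neg]

theorem sum_Ioc_inv_eq_zero (hp2 : p ≠ 2) : ∑ j ∈ Ioc 0 (p - 1), (j : ZMod p)⁻¹ = 0 := by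
  have h2 : (2 : ZMod p) ≠ 0 := by
    exact_mod_cast (ZMod.natCast_eq_zero_iff 2 p).not.2 fun h =>
      hp2 ((Nat.prime_dvd_prime_iff_eq hp.out Nat.prime_two).1 h)
  have hneg := sum_Ioc_inv_eq_neg_sum_Ioc_inv (p := p) (a := 0) (b := p - 1)
    (by have := hp.out.pos; omega)
  rw [Nat.sub_self, Nat.sub_zero] at hneg
  refine (mul_eq_zero.1 (?_ : (2 : ZMod p) * _ = 0)).resolve_left h2
  linear_combination hneg

theorem two_mul_sum_inv_add_three_mul_eq_zero (h5 : 5 ≤ p) {q : ℤ}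
    (hq : (3 : ℤ) ^ (p - 1) - 1 = p * q) :
    2 * ∑ j ∈ Ioc 0 (p / 3), (j : ZMod p)⁻¹ + 3 * q = 0 := by
  have h3p : ¬ 3 ∣ p := fun h => by
    have := (Nat.prime_dvd_prime_iff_eq Nat.prime_three hp.out).1 h; omega
  have h3 : ((3 : ℕ) : ZMod p) ≠ 0 := fun h => by
    have := Nat.le_of_dvd (by norm_num) ((ZMod.natCast_eq_zero_iff 3 p).1 h); omega
  have hlow : ∑ j ∈ Ioc (p / 3) (p - 1), (j : ZMod p)⁻¹
      = -∑ j ∈ Ioc 0 (p / 3), (j : ZMod p)⁻¹ := by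
    have hS := sum_Ioc_inv_eq_zero (p := p) (by omega)
    rw [← sum_Ioc_consecutive _ (Nat.zero_le _) (by omega : p / 3 ≤ p - 1)] at hS
    linear_combination hS
  have hhigh : ∑ j ∈ Ioc (2 * p / 3) (p - 1), (j : ZMod p)⁻¹
      = -∑ j ∈ Ioc 0 (p / 3), (j : ZMod p)⁻¹ := by
    rw [sum_Ioc_inv_eq_neg_sum_Ioc_inv (by omega), Nat.sub_self,
      show p - 1 - 2 * p / 3 = p / 3 by omega]
  have hlerch := lerch_formula h3 (q := q) (by exact_mod_cast hq)
  push_cast at h3 hlerch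
  have h3q : 3 * (q : ZMod p)
      = ∑ j ∈ Ioc 0 (p - 1), ((3 * j / p : ℕ) : ZMod p) * (j : ZMod p)⁻¹ := by
    rw [hlerch, mul_sum]
    refine sum_congr rfl fun j _ => ?_
    rw [mul_div_assoc', mul_div_mul_left _ _ h3, div_eq_mul_inv]
  rw [h3q, sum_Ioc_three_mul_div_mul h3p, hlow, hhigh]
  ring

end Prime

theorem exists_eq_mul_of_mul_natCast_eq {p D : ℕ} {x : ℚ} {A : ℤ} (hD : ¬ p ∣ D)
    (hx : x * D = A) (hA : (A : ZMod p) = 0) : ∃ c : ℚ, x = p * c ∧ ¬ p ∣ c.den := by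
  obtain ⟨B, rfl⟩ := (ZMod.intCast_zmod_eq_zero_iff_dvd A p).1 hA
  have hD0 : (D : ℚ) ≠ 0 := Nat.cast_ne_zero.2 (by rintro rfl; exact hD (dvd_zero p))
  refine ⟨B / D, ?_, fun h => hD ?_⟩
  · rw [mul_div_assoc', eq_div_iff hD0, hx]
    push_cast
    ring
  · have := Rat.den_dvd B D
    rw [Rat.divInt_eq_div] at this
    exact_mod_cast h.trans (Int.natCast_dvd_natCast.1 (by exact_mod_cast this))

theorem natCast_sum_factorial_div {K : Type*} [DivisionSemiring K] {m : ℕ}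
    (h : ∀ j < m, ((j + 1 : ℕ) : K) ≠ 0) :
    ((∑ j ∈ range m, m ! / (j + 1) : ℕ) : K) = m ! * ∑ j ∈ range m, 1 / ((j : K) + 1) := by
  rw [Nat.cast_sum, mul_sum]
  refine sum_congr rfl fun j hj => ?_
  have hj := mem_range.1 hj
  rw [Nat.cast_div (Nat.dvd_factorial j.succ_pos hj) (h j hj), mul_one_div, Nat.cast_succ]

theorem sum_range_one_div_eq_sum_Ioc_inv {K : Type*} [DivisionRing K] (m : ℕ) :
    ∑ j ∈ range m, 1 / ((j : K) + 1) = ∑ j ∈ Ioc 0 m, (j : K)⁻¹ := by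
  rw [range_eq_Ico, ← Ico_add_one_add_one_eq_Ioc, ← sum_Ico_add' (fun j : ℕ => (j : K)⁻¹)]
  simp

theorem stmt9 (p : ℕ) (hp : p.Prime) (h5 : 5 ≤ p) :
    ∃ c : ℚ,
      H (p / 3) - (-(3 / 2) * (((3 : ℚ) ^ (p - 1) - 1) / p)) = p * c ∧ ¬ (p ∣ c.den) := by
  have := Fact.mk hp
  have hcop : IsCoprime (3 : ℤ) p := by
    exact_mod_cast Nat.isCoprime_iff_coprime.2
      ((Nat.coprime_primes Nat.prime_three hp).2 (by omega))
  obtain ⟨q, hq⟩ : (p : ℤ) ∣ 3 ^ (p - 1) - 1 :=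
    (Int.ModEq.pow_card_sub_one_eq_one hp hcop).symm.dvd
  set m := p / 3
  set N := ∑ j ∈ range m, m ! / (j + 1)
  have hNQ : (N : ℚ) = m ! * H m := natCast_sum_factorial_div fun j _ => by positivity
  have hNZ : (N : ZMod p) = m ! * ∑ j ∈ Ioc 0 m, (j : ZMod p)⁻¹ := by
    rw [natCast_sum_factorial_div fun j hj h => ?_, sum_range_one_div_eq_sum_Ioc_inv]
    have := Nat.le_of_dvd j.succ_pos ((ZMod.natCast_eq_zero_iff _ p).1 h)
    omega
  clear_value N
  refine exists_eq_mul_of_mul_natCast_eq (D := 2 * m !) (A := 2 * N + 3 * m ! * q) ?_ ?_ ?_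
  · rw [hp.dvd_mul, hp.dvd_factorial]
    rintro (h | h)
    · have := Nat.le_of_dvd two_pos h; omega
    · omega
  · have hq' : ((3 : ℚ) ^ (p - 1) - 1) / p = q := by
      rw [div_eq_iff (by exact_mod_cast hp.ne_zero)]
      exact_mod_cast hq.trans (mul_comm _ _)
    push_cast
    rw [hq', hNQ]
    ring
  · push_cast
    rw [hNZ]
    linear_combination (m ! : ZMod p) * two_mul_sum_inv_add_three_mul_eq_zero h5 hq
end

section
/- For any non-negative integer n, the Almkvist-Zudilin number gamma_n = sum_{j=0}^{n} (-1)^{n-j} * 3^{n-3j} * (3j)!/(j!)^3 * C(n,3j) * C(n+j,j) equals sum_{i=0}^{n} C(2i,i)^2 * C(4i,2i) * C(n+3i,4i) * (-3)^{3(n-i)}. -/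
/-!
Both sides are sums of `r ^ m * (4k + m)! / (k! ^ 4 * m!)`, with `(r, m) = (-3, n - 3k)` on the
left and `(-27, n - k)` on the right. By creative telescoping (Zeilberger's algorithm) both
sequences satisfy
`(n + 2)³ u (n + 2) + (2n + 3)(7n² + 21n + 17) u (n + 1) + 81 (n + 1)³ u n = 0`,
and they agree at `n = 0, 1`. Each certificate is a polynomial multiple of a single summand, and
the shift relations of the summand in `m` and in `k` make every summand occurring in a
telescoping identity a polynomial multiple of one base summand, so that each telescoping identity
reduces to a polynomial identity.
-/

open Finset Nat

namespace AlmkvistZudilin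

section Term

variable {K : Type*} [Field K]

theorem factorial_cast_ne_zero [CharZero K] (n : ℕ) : (n ! : K) ≠ 0 :=
  Nat.cast_ne_zero.2 (factorial_ne_zero n)

/-- `r ^ m` times the multinomial coefficient `(4k + m)! / (k! ^ 4 * m!)`, extended by zero to
negative `m` so that the shift relations below hold without side conditions. -/
def multinomialTerm (r : K) (k : ℕ) : ℤ → K
  | (m : ℕ) => r ^ m * (4 * k + m)! / ((k ! : K) ^ 4 * m !)
  | Int.negSucc _ => 0

theorem multinomialTerm_natCast (r : K) (k m : ℕ) :
    multinomialTerm r k m = r ^ m * (4 * k + m)! / ((k ! : K) ^ 4 * m !) := rfl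

theorem multinomialTerm_of_neg (r : K) (k : ℕ) {m : ℤ} (hm : m < 0) :
    multinomialTerm r k m = 0 := by
  obtain ⟨s, rfl⟩ := Int.eq_negSucc_of_lt_zero hm
  rfl

theorem multinomialTerm_zero_left [CharZero K] (r : K) (m : ℕ) :
    multinomialTerm r 0 m = r ^ m := by
  rw [multinomialTerm_natCast, factorial_zero, cast_one, one_pow, one_mul, mul_zero, zero_add,
    mul_div_cancel_right₀ _ (factorial_cast_ne_zero m)]

theorem multinomialTerm_succ_right [CharZero K] (r : K) (k : ℕ) (m : ℤ) :
    ((m : K) + 1) * multinomialTerm r k (m + 1)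
      = r * (4 * k + m + 1) * multinomialTerm r k m := by
  rcases lt_trichotomy m (-1) with hm | rfl | hm
  · simp [multinomialTerm_of_neg r k (by omega : m < 0),
      multinomialTerm_of_neg r k (by omega : m + 1 < 0)]
  · simp [multinomialTerm_of_neg r k (by norm_num : (-1 : ℤ) < 0)]
  · lift m to ℕ using by omega
    rw [show (m : ℤ) + 1 = (m + 1 : ℕ) by push_cast; ring, multinomialTerm_natCast,
      multinomialTerm_natCast, show 4 * k + (m + 1) = 4 * k + m + 1 by ring, factorial_succ,
      factorial_succ]
    push_cast
    field_simp [factorial_cast_ne_zero]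
    ring

theorem multinomialTerm_succ_left [CharZero K] (r : K) (k : ℕ) (m : ℤ) :
    r ^ 4 * ((k : K) + 1) ^ 4 * multinomialTerm r (k + 1) m
      = ((m : K) + 1) * (m + 2) * (m + 3) * (m + 4) * multinomialTerm r k (m + 4) := by
  rcases lt_or_ge m 0 with hm | hm
  · rw [multinomialTerm_of_neg r (k + 1) hm, mul_zero]
    rcases lt_or_ge m (-4) with hm' | hm'
    · rw [multinomialTerm_of_neg r k (by omega), mul_zero]
    · interval_cases m <;> norm_num
  · lift m to ℕ using hm
    rw [show (m : ℤ) + 4 = (m + 4 : ℕ) by push_cast; ring, multinomialTerm_natCast,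
      multinomialTerm_natCast, show 4 * (k + 1) + m = 4 * k + (m + 4) by ring]
    have hfac : ((m + 4)! : K) = (m + 1) * (m + 2) * (m + 3) * (m + 4) * m ! := by
      push_cast [factorial_succ]; ring
    have h1 : (m : K) + 1 ≠ 0 := by exact_mod_cast succ_ne_zero m
    have h2 : (m : K) + 2 ≠ 0 := by exact_mod_cast succ_ne_zero (m + 1)
    have h3 : (m : K) + 3 ≠ 0 := by exact_mod_cast succ_ne_zero (m + 2)
    have h4 : (m : K) + 4 ≠ 0 := by exact_mod_cast succ_ne_zero (m + 3)
    have hk : (k : K) + 1 ≠ 0 := Nat.cast_add_one_ne_zero k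
    rw [hfac, factorial_succ, cast_mul, Int.cast_natCast]
    push_cast
    field_simp [factorial_cast_ne_zero]
    ring

theorem multinomialTerm_succ_left_add_one [CharZero K] (r : K) (k : ℕ) (m : ℤ) :
    r ^ 4 * ((k : K) + 1) ^ 4 * multinomialTerm r (k + 1) (m + 1)
      = r * (4 * k + m + 5) * ((m + 2) * (m + 3) * (m + 4)) * multinomialTerm r k (m + 4) := by
  have h1 := multinomialTerm_succ_left r k (m + 1)
  have h2 := multinomialTerm_succ_right r k (m + 4)
  rw [show m + 1 + 4 = m + 4 + 1 by ring] at h1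
  push_cast at h1 h2
  linear_combination h1 + ((m : K) + 2) * (m + 3) * (m + 4) * h2

theorem multinomialTerm_succ_left_add_two [CharZero K] (r : K) (k : ℕ) (m : ℤ) :
    r ^ 4 * ((k : K) + 1) ^ 4 * multinomialTerm r (k + 1) (m + 2)
      = r ^ 2 * ((4 * k + m + 5) * (4 * k + m + 6)) * ((m + 3) * (m + 4))
        * multinomialTerm r k (m + 4) := by
  have h1 := multinomialTerm_succ_left r k (m + 2)
  have h2 := multinomialTerm_succ_right r k (m + 4 + 1)
  have h3 := multinomialTerm_succ_right r k (m + 4)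
  rw [show m + 2 + 4 = m + 4 + 1 + 1 by ring] at h1
  push_cast at h1 h2 h3
  linear_combination h1 + ((m : K) + 3) * (m + 4) * (m + 5) * h2
    + ((m : K) + 3) * (m + 4) * r * (4 * k + m + 6) * h3

theorem multinomialTerm_succ_left_add_three [CharZero K] (r : K) (k : ℕ) (m : ℤ) :
    r ^ 4 * ((k : K) + 1) ^ 4 * multinomialTerm r (k + 1) (m + 3)
      = r ^ 3 * ((4 * k + m + 5) * (4 * k + m + 6) * (4 * k + m + 7)) * (m + 4)
        * multinomialTerm r k (m + 4) := by
  have h1 := multinomialTerm_succ_left r k (m + 3)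
  have h2 := multinomialTerm_succ_right r k (m + 4 + 1 + 1)
  have h3 := multinomialTerm_succ_right r k (m + 4 + 1)
  have h4 := multinomialTerm_succ_right r k (m + 4)
  rw [show m + 3 + 4 = m + 4 + 1 + 1 + 1 by ring] at h1
  push_cast at h1 h2 h3 h4
  linear_combination h1 + ((m : K) + 4) * (m + 5) * (m + 6) * h2
    + ((m : K) + 4) * (m + 5) * r * (4 * k + m + 7) * h3
    + ((m : K) + 4) * r ^ 2 * (4 * k + m + 7) * (4 * k + m + 6) * h4

end Term

section Recurrence

variable {K : Type*} [Field K]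

theorem sum_recurrence_of_telescoping {F : ℕ → ℕ → K} (G : ℕ → K) (a b c : K) {n : ℕ}
    (hF : ∀ n k, n < k → F n k = 0) (hG₀ : G 0 = 0) (hG : G (n + 3) = 0)
    (hFG : ∀ k, a * F (n + 2) k + b * F (n + 1) k + c * F n k = G (k + 1) - G k) :
    a * ∑ k ∈ range (n + 3), F (n + 2) k + b * ∑ k ∈ range (n + 2), F (n + 1) k
      + c * ∑ k ∈ range (n + 1), F n k = 0 := by
  have h₁ : ∑ k ∈ range (n + 3), F (n + 1) k = ∑ k ∈ range (n + 2), F (n + 1) k := by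
    rw [sum_range_succ, hF _ _ (by omega), add_zero]
  have h₀ : ∑ k ∈ range (n + 3), F n k = ∑ k ∈ range (n + 1), F n k := by
    rw [sum_range_succ, sum_range_succ, hF n (n + 1) (by omega), hF n (n + 2) (by omega),
      add_zero, add_zero]
  rw [← h₁, ← h₀, mul_sum, mul_sum, mul_sum, ← sum_add_distrib, ← sum_add_distrib,
    sum_congr rfl fun k _ => hFG k, sum_range_sub, hG, hG₀, sub_zero]

theorem eq_of_recurrence {u v : ℕ → K} {a b c : ℕ → K} (ha : ∀ n, a n ≠ 0)
    (hu : ∀ n, a n * u (n + 2) + b n * u (n + 1) + c n * u n = 0)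
    (hv : ∀ n, a n * v (n + 2) + b n * v (n + 1) + c n * v n = 0)
    (h₀ : u 0 = v 0) (h₁ : u 1 = v 1) : u = v := by
  have key : ∀ n, u n = v n ∧ u (n + 1) = v (n + 1) := by
    intro n
    induction n with
    | zero => exact ⟨h₀, h₁⟩
    | succ n ih =>
      refine ⟨ih.2, mul_left_cancel₀ (ha n) ?_⟩
      linear_combination hu n - hv n - b n * ih.2 - c n * ih.1
  exact funext fun n => (key n).1

end Recurrence

def lhsTerm (n k : ℕ) : ℚ := multinomialTerm (-3) k ((n : ℤ) - 3 * k)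

def rhsTerm (n k : ℕ) : ℚ := multinomialTerm (-27) k ((n : ℤ) - k)

def lhsCert (n : ℕ) : ℕ → ℚ
  | 0 => 0
  | k + 1 => -4 * (4 * n + 5) * ((n : ℚ) - 3 * k) * (n - 3 * k + 1) * lhsTerm (n + 1) k

def rhsCert (n : ℕ) : ℕ → ℚ
  | 0 => 0
  | k + 1 => -4 / 729 * (4 * n + 7) * ((n : ℚ) - k + 2) * (n - k + 3) * rhsTerm (n + 3) k

theorem lhsTerm_zero_right (n : ℕ) : lhsTerm n 0 = (-3) ^ n := by
  simp only [lhsTerm, CharP.cast_eq_zero, mul_zero, sub_zero, multinomialTerm_zero_left]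

theorem rhsTerm_zero_right (n : ℕ) : rhsTerm n 0 = (-27) ^ n := by
  simp only [rhsTerm, CharP.cast_eq_zero, sub_zero, multinomialTerm_zero_left]

theorem lhsTerm_eq_zero {n k : ℕ} (h : n < 3 * k) : lhsTerm n k = 0 :=
  multinomialTerm_of_neg _ _ (by omega)

theorem rhsTerm_eq_zero {n k : ℕ} (h : n < k) : rhsTerm n k = 0 :=
  multinomialTerm_of_neg _ _ (by omega)

theorem lhsTerm_telescoping (n k : ℕ) :
    ((n : ℚ) + 2) ^ 3 * lhsTerm (n + 2) k
      + (2 * n + 3) * (7 * n ^ 2 + 21 * n + 17) * lhsTerm (n + 1) k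
      + 81 * ((n : ℚ) + 1) ^ 3 * lhsTerm n k
      = lhsCert n (k + 1) - lhsCert n k := by
  cases k with
  | zero =>
    simp only [lhsTerm_zero_right, lhsCert]
    ring
  | succ j =>
    set m : ℤ := n - 3 * j - 3 with hm
    have e0 : lhsTerm n (j + 1) = multinomialTerm (-3) (j + 1) m := by
      rw [lhsTerm]; congr 1; push_cast; ring
    have e1 : lhsTerm (n + 1) (j + 1) = multinomialTerm (-3) (j + 1) (m + 1) := by
      rw [lhsTerm]; congr 1; push_cast; ring
    have e2 : lhsTerm (n + 2) (j + 1) = multinomialTerm (-3) (j + 1) (m + 2) := by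
      rw [lhsTerm]; congr 1; push_cast; ring
    have eX : lhsTerm (n + 1) j = multinomialTerm (-3) j (m + 4) := by
      rw [lhsTerm]; congr 1; push_cast; ring
    have h0 := multinomialTerm_succ_left (-3 : ℚ) j m
    have h1 := multinomialTerm_succ_left_add_one (-3 : ℚ) j m
    have h2 := multinomialTerm_succ_left_add_two (-3 : ℚ) j m
    simp only [lhsCert, e0, e1, e2, eX]
    rw [hm] at h0 h1 h2
    push_cast at h0 h1 h2 ⊢
    have hR : (-3 : ℚ) ^ 4 * ((j : ℚ) + 1) ^ 4 ≠ 0 := by positivity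
    refine mul_left_cancel₀ hR ?_
    linear_combination ((n : ℚ) + 2) ^ 3 * h2
      + ((2 * n + 3) * (7 * n ^ 2 + 21 * n + 17)
        + 4 * (4 * n + 5) * ((n : ℚ) - 3 * (j + 1)) * (n - 3 * (j + 1) + 1)) * h1
      + 81 * ((n : ℚ) + 1) ^ 3 * h0

theorem rhsTerm_telescoping (n k : ℕ) :
    ((n : ℚ) + 2) ^ 3 * rhsTerm (n + 2) k
      + (2 * n + 3) * (7 * n ^ 2 + 21 * n + 17) * rhsTerm (n + 1) k
      + 81 * ((n : ℚ) + 1) ^ 3 * rhsTerm n k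
      = rhsCert n (k + 1) - rhsCert n k := by
  cases k with
  | zero =>
    simp only [rhsTerm_zero_right, rhsCert]
    ring
  | succ j =>
    set m : ℤ := n - j - 1 with hm
    have e0 : rhsTerm n (j + 1) = multinomialTerm (-27) (j + 1) m := by
      rw [rhsTerm]; congr 1; push_cast; ring
    have e1 : rhsTerm (n + 1) (j + 1) = multinomialTerm (-27) (j + 1) (m + 1) := by
      rw [rhsTerm]; congr 1; push_cast; ring
    have e2 : rhsTerm (n + 2) (j + 1) = multinomialTerm (-27) (j + 1) (m + 2) := by
      rw [rhsTerm]; congr 1; push_cast; ring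
    have e3 : rhsTerm (n + 3) (j + 1) = multinomialTerm (-27) (j + 1) (m + 3) := by
      rw [rhsTerm]; congr 1; push_cast; ring
    have eX : rhsTerm (n + 3) j = multinomialTerm (-27) j (m + 4) := by
      rw [rhsTerm]; congr 1; push_cast; ring
    have h0 := multinomialTerm_succ_left (-27 : ℚ) j m
    have h1 := multinomialTerm_succ_left_add_one (-27 : ℚ) j m
    have h2 := multinomialTerm_succ_left_add_two (-27 : ℚ) j m
    have h3 := multinomialTerm_succ_left_add_three (-27 : ℚ) j m
    simp only [rhsCert, e0, e1, e2, e3, eX]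
    rw [hm] at h0 h1 h2 h3
    push_cast at h0 h1 h2 h3 ⊢
    have hR : (-27 : ℚ) ^ 4 * ((j : ℚ) + 1) ^ 4 ≠ 0 := by positivity
    refine mul_left_cancel₀ hR ?_
    linear_combination ((n : ℚ) + 2) ^ 3 * h2
      + (2 * n + 3) * (7 * n ^ 2 + 21 * n + 17) * h1 + 81 * ((n : ℚ) + 1) ^ 3 * h0
      + 4 / 729 * (4 * n + 7) * ((n : ℚ) - (j + 1) + 2) * (n - (j + 1) + 3) * h3

theorem lhs_summand_eq (n j : ℕ) :
    (-1 : ℚ) ^ (n - j) * (3 : ℚ) ^ ((n : ℤ) - 3 * j) * (Nat.factorial (3 * j) : ℚ)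
      / (Nat.factorial j : ℚ) ^ 3 * (n.choose (3 * j)) * ((n + j).choose j) = lhsTerm n j := by
  rcases lt_or_ge n (3 * j) with h | h
  · rw [choose_eq_zero_of_lt h, lhsTerm_eq_zero h]
    simp
  obtain ⟨m, rfl⟩ := Nat.exists_eq_add_of_le h
  have hsign : (-1 : ℚ) ^ (3 * j + m - j) = (-1) ^ m := by
    rw [show 3 * j + m - j = m + 2 * j by omega, pow_add, pow_mul, neg_one_sq, one_pow, mul_one]
  rw [lhsTerm, show ((3 * j + m : ℕ) : ℤ) - 3 * j = m by push_cast; ring,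
    multinomialTerm_natCast, zpow_natCast, hsign, cast_choose ℚ h,
    cast_choose ℚ (show j ≤ 3 * j + m + j by omega),
    show 3 * j + m - 3 * j = m by omega, show 3 * j + m + j - j = 3 * j + m by omega,
    show 3 * j + m + j = 4 * j + m by omega, neg_pow (3 : ℚ)]
  field_simp [factorial_cast_ne_zero]

theorem rhs_summand_eq (n i : ℕ) :
    (((2 * i).choose i : ℚ)) ^ 2 * ((4 * i).choose (2 * i)) * ((n + 3 * i).choose (4 * i))
      * (-3 : ℚ) ^ (3 * (n - i)) = rhsTerm n i := by
  rcases lt_or_ge n i with h | h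
  · rw [choose_eq_zero_of_lt (by omega : n + 3 * i < 4 * i), rhsTerm_eq_zero h]
    simp
  obtain ⟨m, rfl⟩ := Nat.exists_eq_add_of_le h
  rw [rhsTerm, show ((i + m : ℕ) : ℤ) - i = m by push_cast; ring, multinomialTerm_natCast,
    show i + m - i = m by omega, pow_mul, show (-3 : ℚ) ^ 3 = -27 by norm_num,
    cast_choose ℚ (show i ≤ 2 * i by omega), cast_choose ℚ (show 2 * i ≤ 4 * i by omega),
    cast_choose ℚ (show 4 * i ≤ i + m + 3 * i by omega), show 2 * i - i = i by omega,
    show 4 * i - 2 * i = 2 * i by omega, show i + m + 3 * i - 4 * i = m by omega,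
    show i + m + 3 * i = 4 * i + m by omega]
  field_simp [factorial_cast_ne_zero]

theorem sum_lhsTerm_eq_sum_rhsTerm (n : ℕ) :
    ∑ j ∈ range (n + 1), lhsTerm n j = ∑ i ∈ range (n + 1), rhsTerm n i := by
  refine congrFun (eq_of_recurrence (u := fun n => ∑ j ∈ range (n + 1), lhsTerm n j)
    (v := fun n => ∑ i ∈ range (n + 1), rhsTerm n i) (a := fun n => ((n : ℚ) + 2) ^ 3)
    (b := fun n => (2 * n + 3) * (7 * n ^ 2 + 21 * n + 17))
    (c := fun n => 81 * ((n : ℚ) + 1) ^ 3)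
    (fun n => by positivity) (fun n => ?_) (fun n => ?_) ?_ ?_) n
  · exact sum_recurrence_of_telescoping (lhsCert n) _ _ _
      (fun _ _ h => lhsTerm_eq_zero (by omega)) rfl
      (by rw [lhsCert, lhsTerm_eq_zero (by omega), mul_zero]) (lhsTerm_telescoping n)
  · exact sum_recurrence_of_telescoping (rhsCert n) _ _ _ (fun _ _ => rhsTerm_eq_zero) rfl
      (by simp [rhsCert]) (rhsTerm_telescoping n)
  · simp [lhsTerm_zero_right, rhsTerm_zero_right]
  · have h11 : rhsTerm 1 1 = 24 := by
      rw [rhsTerm, show ((1 : ℕ) : ℤ) - (1 : ℕ) = ((0 : ℕ) : ℤ) by norm_num,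
        multinomialTerm_natCast]
      norm_num [factorial]
    norm_num [sum_range_succ, lhsTerm_zero_right, rhsTerm_zero_right, lhsTerm_eq_zero, h11]

end AlmkvistZudilin

theorem stmt11 (n : ℕ) :
    ∑ j ∈ Finset.range (n + 1),
        (-1 : ℚ) ^ (n - j) * (3 : ℚ) ^ ((n : ℤ) - 3 * j) * (Nat.factorial (3 * j) : ℚ)
          / (Nat.factorial j : ℚ) ^ 3 * (n.choose (3 * j)) * ((n + j).choose j)
      = ∑ i ∈ Finset.range (n + 1),
          (((2 * i).choose i : ℚ)) ^ 2 * ((4 * i).choose (2 * i)) * ((n + 3 * i).choose (4 * i))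
            * (-3 : ℚ) ^ (3 * (n - i)) := by
  simp only [AlmkvistZudilin.lhs_summand_eq, AlmkvistZudilin.rhs_summand_eq]
  exact AlmkvistZudilin.sum_lhsTerm_eq_sum_rhsTerm n
end

section
/- For any non-negative integer n, the Almkvist-Zudilin number gamma_n equals sum_{i=0}^{floor(n/3)} C(2i,i)^2 * C(4i,2i) * C(n+i,4i) * (-3)^{n-3i}. -/
/-!
Termwise: `C(n, 3j) C(n+j, j) = C(n+j, 4j) C(4j, j)` (both count a `j`-subset of an `n+j`-set
together with a disjoint `3j`-subset), and `(3j)!/(j!)³ · C(4j, j)` and `C(2j, j)² C(4j, 2j)`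
are both the multinomial coefficient `(4j)!/(j!)⁴`. The signs agree because `n - j` and
`n - 3j` have the same parity.
-/

def gammaAZ (n : ℕ) : ℚ :=
  ∑ j ∈ Finset.range (n / 3 + 1),
    (-1 : ℚ) ^ (n - j) * 3 ^ (n - 3 * j) * (Nat.factorial (3 * j) : ℚ)
      / (Nat.factorial j : ℚ) ^ 3 * (n.choose (3 * j)) * ((n + j).choose j)

theorem Nat.choose_mul_add_choose (n m j : ℕ) :
    n.choose m * (n + j).choose j = (n + j).choose (m + j) * (m + j).choose j := by
  rw [Nat.choose_mul (Nat.le_add_left j m), Nat.add_sub_cancel, Nat.add_sub_cancel, mul_comm]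

theorem factorial_div_factorial_pow_mul_choose (j : ℕ) :
    ((3 * j).factorial : ℚ) / (j.factorial : ℚ) ^ 3 * (4 * j).choose j
      = ((2 * j).choose j : ℚ) ^ 2 * (4 * j).choose (2 * j) := by
  rw [Nat.cast_choose ℚ (by omega : j ≤ 4 * j), Nat.cast_choose ℚ (by omega : j ≤ 2 * j),
    Nat.cast_choose ℚ (by omega : 2 * j ≤ 4 * j), (by omega : 4 * j - j = 3 * j),
    (by omega : 2 * j - j = j), (by omega : 4 * j - 2 * j = 2 * j)]
  have := fun m : ℕ => (Nat.cast_ne_zero (R := ℚ)).mpr m.factorial_ne_zero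
  field_simp

theorem neg_one_pow_mul_three_pow {n j : ℕ} (h : 3 * j ≤ n) :
    (-1 : ℚ) ^ (n - j) * 3 ^ (n - 3 * j) = (-3) ^ (n - 3 * j) := by
  rw [show n - j = n - 3 * j + 2 * j by omega, pow_add, pow_mul, neg_one_sq, one_pow, mul_one,
    ← mul_pow, neg_one_mul]

theorem stmt12 (n : ℕ) :
    gammaAZ n
      = ∑ i ∈ Finset.range (n / 3 + 1),
          (((2 * i).choose i : ℚ)) ^ 2 * ((4 * i).choose (2 * i)) * ((n + i).choose (4 * i))
            * (-3 : ℚ) ^ (n - 3 * i) := by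
  unfold gammaAZ
  refine Finset.sum_congr rfl fun j hj => ?_
  have hj : 3 * j ≤ n := by rw [Finset.mem_range] at hj; omega
  have hchoose : (n.choose (3 * j) : ℚ) * (n + j).choose j
      = (n + j).choose (4 * j) * (4 * j).choose j := by
    exact_mod_cast (show 3 * j + j = 4 * j by ring) ▸ Nat.choose_mul_add_choose n (3 * j) j
  rw [← factorial_div_factorial_pow_mul_choose, ← neg_one_pow_mul_three_pow hj]
  linear_combination
    (-1 : ℚ) ^ (n - j) * 3 ^ (n - 3 * j) * ((3 * j).factorial : ℚ) / (j.factorial : ℚ) ^ 3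
      * hchoose
end
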